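/- (CN-type positivity) Let 0 < α ≤ 1 and b(z) = 1 - α/2 + (α/2)z, i.e. b_0 = 1-α/2, b_1 = α/2, b_n = 0 for n ≥ 2. Define c_n = 2b_0 a_n^{(-α)} - Σ_{j=0}^n b_j a_{n-j}^{(-α)} where a_n^{(-α)} = Γ(n+α)/(Γ(α)Γ(n+1)). Then c_0 = 1 - α/2 > 0 and c_n ≥ 0 for all n ≥ 1. -/

import Mathlib

/-- Taylor coefficients of `(1-z)^{-α}`: `a_n^{(-α)} = Γ(n+α)/(Γ(α)Γ(n+1))`. -/
noncomputable def aNeg (α : ℝ) (n : ℕ) : ℝ :=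
  Real.Gamma (n + α) / (Real.Gamma α * (n.factorial : ℝ))

/-- CN-type coefficients: `b(z) = 1 - α/2 + (α/2)z`. -/
noncomputable def bCN (α : ℝ) (n : ℕ) : ℝ :=
  if n = 0 then 1 - α / 2 else if n = 1 then α / 2 else 0

/-- `c_n = 2 b_0 a_n^{(-α)} - Σ_{j=0}^n b_j a_{n-j}^{(-α)}`. -/
noncomputable def cCN (α : ℝ) (n : ℕ) : ℝ :=
  2 * bCN α 0 * aNeg α n - ∑ j ∈ Finset.range (n + 1), bCN α j * aNeg α (n - j)

lemma aNeg_pos (α : ℝ) (hα : 0 < α) (n : ℕ) : 0 < aNeg α n := by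
  have h1 : 0 < Real.Gamma ((n : ℝ) + α) :=
    Real.Gamma_pos_of_pos (by positivity)
  have h2 : 0 < Real.Gamma α := Real.Gamma_pos_of_pos hα
  have h3 : (0 : ℝ) < n.factorial := by exact_mod_cast n.factorial_pos
  exact div_pos h1 (mul_pos h2 h3)

lemma aNeg_succ (α : ℝ) (hα : 0 < α) (m : ℕ) :
    aNeg α (m + 1) = aNeg α m * (((m : ℝ) + α) / ((m : ℝ) + 1)) := by
  have hne : ((m : ℝ) + α) ≠ 0 := by positivity
  have hG : Real.Gamma (((m + 1 : ℕ) : ℝ) + α) = ((m : ℝ) + α) * Real.Gamma ((m : ℝ) + α) := by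
    push_cast
    rw [add_right_comm, Real.Gamma_add_one hne]
  have hΓα : Real.Gamma α ≠ 0 := (Real.Gamma_pos_of_pos hα).ne'
  have hfac : ((m.factorial : ℝ)) ≠ 0 := by exact_mod_cast m.factorial_pos.ne'
  have hm1 : ((m : ℝ) + 1) ≠ 0 := by positivity
  simp only [aNeg, hG, Nat.factorial_succ]
  push_cast
  field_simp

lemma cCN_succ (α : ℝ) (m : ℕ) :
    cCN α (m + 1) = bCN α 0 * aNeg α (m + 1) - bCN α 1 * aNeg α m := by
  have hsub : ∑ j ∈ Finset.range (m + 2), bCN α j * aNeg α (m + 1 - j)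
      = ∑ j ∈ Finset.range 2, bCN α j * aNeg α (m + 1 - j) := by
    refine (Finset.sum_subset (by intro x hx; simp at hx ⊢; omega) ?_).symm
    intro x _ hx
    simp only [Finset.mem_range, not_lt] at hx
    have h0 : x ≠ 0 := by omega
    have h1 : x ≠ 1 := by omega
    simp [bCN, h0, h1]
  simp only [cCN, hsub, Finset.sum_range_succ, Finset.sum_range_one]
  norm_num
  ring

theorem stmt12 (α : ℝ) (hα : 0 < α) (hα1 : α ≤ 1) :
    cCN α 0 = 1 - α / 2 ∧ 0 < cCN α 0 ∧ ∀ n : ℕ, 1 ≤ n → 0 ≤ cCN α n := by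
  have hc0 : cCN α 0 = 1 - α / 2 := by
    have ha0 : aNeg α 0 = 1 := by
      simp [aNeg, Real.Gamma_pos_of_pos hα |>.ne', div_self]
    simp [cCN, bCN, ha0]
    ring
  refine ⟨hc0, by rw [hc0]; linarith, ?_⟩
  intro n hn
  obtain ⟨m, rfl⟩ := Nat.exists_eq_add_of_le hn
  rw [show 1 + m = m + 1 from Nat.add_comm 1 m, cCN_succ]
  rw [aNeg_succ α hα m]
  have ham := aNeg_pos α hα m
  have hm1 : (0 : ℝ) < (m : ℝ) + 1 := by positivity
  have hm0 : (0 : ℝ) ≤ (m : ℝ) := Nat.cast_nonneg m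
  have hkey : bCN α 1 ≤ bCN α 0 * (((m : ℝ) + α) / ((m : ℝ) + 1)) := by
    simp only [bCN, if_true]
    norm_num
    rw [mul_div_assoc', le_div_iff₀ hm1]
    nlinarith
  have hkey' : 0 ≤ bCN α 0 * (((m : ℝ) + α) / ((m : ℝ) + 1)) - bCN α 1 := by linarith
  nlinarith [mul_nonneg hkey' ham.le]
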